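/- Let G be a group, N a finite normal subgroup of G, and suppose the quotient G/N is infinite cyclic. Then G contains a cyclic subgroup of finite index (i.e., G is virtually cyclic). -/

import Mathlib

/-!
Lift a generator of `G ⧸ N` to `g : G`. Then `N ⊔ ⟨g⟩ = G`, and since `N` is normal every coset
of `⟨g⟩` is represented by an element of `N`, so `⟨g⟩` has at most `|N|` cosets.
-/

namespace Subgroup

variable {G : Type*} [Group G]

theorem finiteIndex_of_normal_sup_eq_top {N H : Subgroup G} [N.Normal] [Finite N]
    (hNH : N ⊔ H = ⊤) : H.FiniteIndex := by
  have hsurj : Function.Surjective fun n : N => (n : G ⧸ H) := by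
    intro x
    obtain ⟨y, rfl⟩ := QuotientGroup.mk_surjective x
    obtain ⟨n, hn, h, hh, rfl⟩ := mem_sup_of_normal_left.mp (hNH ▸ mem_top y : y ∈ N ⊔ H)
    exact ⟨⟨n, hn⟩, QuotientGroup.eq.mpr (by simpa using hh)⟩
  have : Finite (G ⧸ H) := Finite.of_surjective _ hsurj
  exact finiteIndex_of_finite_quotient

theorem exists_sup_zpowers_eq_top_of_isCyclic_quotient (N : Subgroup G) [N.Normal] [IsCyclic (G ⧸ N)] :
    ∃ g : G, N ⊔ zpowers g = ⊤ := by
  obtain ⟨q, hq⟩ := isCyclic_iff_exists_zpowers_eq_top.mp ‹IsCyclic (G ⧸ N)›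
  obtain ⟨g, rfl⟩ := QuotientGroup.mk_surjective q
  refine ⟨g, ?_⟩
  rw [← QuotientGroup.comap_map_mk', MonoidHom.map_zpowers, QuotientGroup.mk'_apply, hq,
    comap_top]

end Subgroup

theorem stmt0_general (G : Type*) [Group G] (N : Subgroup G) [N.Normal]
    (hNfin : (N : Set G).Finite)
    (hcyc : IsCyclic (G ⧸ N)) :
    ∃ H : Subgroup G, IsCyclic H ∧ H.FiniteIndex := by
  have : Finite N := hNfin.to_subtype
  obtain ⟨g, hg⟩ := N.exists_sup_zpowers_eq_top_of_isCyclic_quotient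
  exact ⟨Subgroup.zpowers g, inferInstance, Subgroup.finiteIndex_of_normal_sup_eq_top hg⟩

/-- If `N` is a finite normal subgroup of `G` and `G ⧸ N` is infinite cyclic,
then `G` has a cyclic subgroup of finite index (`G` is virtually cyclic). -/
theorem stmt0 (G : Type*) [Group G] (N : Subgroup G) [N.Normal]
    (hNfin : (N : Set G).Finite)
    (hcyc : IsCyclic (G ⧸ N)) (hinf : Infinite (G ⧸ N)) :
    ∃ H : Subgroup G, IsCyclic H ∧ H.FiniteIndex :=
  stmt0_general G N hNfin hcyc
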